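/- Sequential omission in any order: for any normal logic program Π over atoms 𝒜, any set A = {a₁,…,a_n} ⊆ 𝒜, and any permutation π of {1,…,n}, omit(Π,A) = omit(omit(⋯(omit(Π,{a_{π(1)}}),⋯,{a_{π(n−1)}}),{a_{π(n)}}); i.e., an omission abstraction can be computed by omitting the atoms one at a time in arbitrary order. -/
import Mathlib


universe u

namespace ASP

/-- The head of a rule: falsity `⊥` (a constraint), a plain atom head,
or a choice head `{a}` (the common syntactic extension). -/
inductive Head (α : Type u) : Type u where
  | bot : Head α
  | atom : α → Head α
  | choice : α → Head α

/-- A (ground) rule with a head, a positive body `B⁺` and a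
(default-)negated body `B⁻`. -/
structure Rule (α : Type u) : Type u where
  head : Head α
  pos : Set α
  neg : Set α

/-- A (ground, propositional) program is a set of rules. -/
abbrev Program (α : Type u) : Type u := Set (Rule α)

def Head.atoms {α : Type u} : Head α → Set α
  | .bot => ∅
  | .atom a => {a}
  | .choice a => {a}

/-- `B±(r) = B⁺(r) ∪ B⁻(r)`. -/
def Rule.bodyAtoms {α : Type u} (r : Rule α) : Set α :=
  r.pos ∪ r.neg

def Rule.atoms {α : Type u} (r : Rule α) : Set α :=
  r.head.atoms ∪ r.bodyAtoms

/-- The program `P` uses only atoms from `𝒜`. -/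
def ProgramOver {α : Type u} (P : Program α) (𝒜 : Set α) : Prop :=
  ∀ r ∈ P, r.atoms ⊆ 𝒜

/-- A normal program: every head is an atom or `⊥` (no genuine choice heads). -/
def IsNormal {α : Type u} (P : Program α) : Prop :=
  ∀ r ∈ P, ∀ a : α, r.head ≠ Head.choice a

/-- `I ⊨ B(r)`, i.e. `B⁺(r) ⊆ I` and `B⁻(r) ∩ I = ∅`. -/
def bodySat {α : Type u} (I : Set α) (r : Rule α) : Prop :=
  r.pos ⊆ I ∧ ∀ a ∈ r.neg, a ∉ I

def headSat {α : Type u} (I : Set α) : Head α → Prop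
  | .bot => False
  | .atom a => a ∈ I
  | .choice _ => True

def isModel {α : Type u} (I : Set α) (P : Program α) : Prop :=
  ∀ r ∈ P, bodySat I r → headSat I r.head

/-- Satisfaction by `J` of the head of a rule of the FLP-reduct `P^I`.
A choice head `{a}` abbreviates the pair of rules `a ← B, not ā` and
`ā ← B, not a` for a fresh complement atom `ā`; projected onto the original
atoms this amounts to the condition `a ∈ I → a ∈ J`. -/
def headSatReduct {α : Type u} (I J : Set α) : Head α → Prop
  | .bot => False
  | .atom a => a ∈ J
  | .choice a => a ∈ I → a ∈ J

/-- `J` is a model of the FLP-reduct `P^I = {r ∈ P | I ⊨ B(r)}`. -/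
def satReduct {α : Type u} (J I : Set α) (P : Program α) : Prop :=
  ∀ r ∈ P, bodySat I r → bodySat J r → headSatReduct I J r.head

/-- `I` is an answer set of `P` iff `I` is a `⊆`-minimal model of the
FLP-reduct `P^I` (note that `I ⊨ P^I` iff `I ⊨ P`). -/
def isAnswerSet {α : Type u} (P : Program α) (I : Set α) : Prop :=
  isModel I P ∧ ∀ J ⊆ I, satReduct J I P → J = I

/-- `AS(P)`, the collection of answer sets of `P`. -/
def AS {α : Type u} (P : Program α) : Set (Set α) :=
  {I | isAnswerSet P I}

/-- The head is omitted, i.e. it is an atom (or choice atom) belonging to `A`;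
`⊥` is never in a set of omitted *atoms*. -/
def Head.omitted {α : Type u} (A : Set α) : Head α → Prop
  | .bot => False
  | .atom a => a ∈ A
  | .choice a => a ∈ A

def Head.toChoice {α : Type u} : Head α → Head α
  | .bot => .bot
  | .atom a => .choice a
  | .choice a => .choice a

/-- How a single rule `r` of the program is transformed into a rule `r'` of the
abstraction when the atoms in `A` are omitted:
(a) `r` is kept unchanged if it contains no omitted atom;
(b) if the body contains an omitted atom but the head is not omitted and not `⊥`,
the body is projected to the remaining atoms and the head becomes a choice;
(c) otherwise the rule is deleted (no `r'` is produced). -/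
def omitRel {α : Type u} (A : Set α) (r r' : Rule α) : Prop :=
  (r.bodyAtoms ∩ A = ∅ ∧ ¬ Head.omitted A r.head ∧ r' = r) ∨
  (r.bodyAtoms ∩ A ≠ ∅ ∧ ¬ Head.omitted A r.head ∧ r.head ≠ Head.bot ∧
    r' = ⟨Head.toChoice r.head, r.pos \ A, r.neg \ A⟩)

/-- The omission abstraction `omit(P, A)`. -/
def omitA {α : Type u} (P : Program α) (A : Set α) : Program α :=
  {r' | ∃ r ∈ P, omitRel A r r'}


/-- Sequential omission of a list of atoms, one at a time (head of the list first):
`omitSeq P [x₁, …, x_n] = omit(⋯(omit(P, {x₁}), ⋯), {x_n})`. -/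
def omitSeq {α : Type u} (P : Program α) : List α → Program α
  | [] => P
  | a :: l => omitSeq (omitA P {a}) l

lemma omitted_union {α : Type u} (A B : Set α) (h : Head α) :
    Head.omitted (A ∪ B) h ↔ Head.omitted A h ∨ Head.omitted B h := by
  cases h <;> simp [Head.omitted]

lemma omitted_toChoice {α : Type u} (B : Set α) (h : Head α) :
    Head.omitted B h.toChoice ↔ Head.omitted B h := by
  cases h <;> simp [Head.omitted, Head.toChoice]

lemma toChoice_toChoice {α : Type u} (h : Head α) : h.toChoice.toChoice = h.toChoice := by
  cases h <;> rfl

lemma toChoice_ne_bot {α : Type u} (h : Head α) (hb : h ≠ .bot) : h.toChoice ≠ .bot := by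
  cases h <;> simp_all [Head.toChoice]

lemma not_omitted_empty {α : Type u} (h : Head α) : ¬ Head.omitted (∅ : Set α) h := by
  cases h <;> simp [Head.omitted]

lemma omitA_empty {α : Type u} (P : Program α) : omitA P ∅ = P := by
  ext r
  constructor
  · rintro ⟨s, hs, (⟨-, -, rfl⟩ | ⟨hne, -, -, -⟩)⟩
    · exact hs
    · exact absurd (Set.inter_empty _) hne
  · intro hr
    exact ⟨r, hr, Or.inl ⟨Set.inter_empty _, not_omitted_empty _, rfl⟩⟩

lemma diff_union_left {α : Type u} {X A B : Set α} (h : X ∩ A = ∅) :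
    X \ (A ∪ B) = X \ B := by
  ext x
  simp only [Set.mem_diff, Set.mem_union]
  constructor
  · rintro ⟨hx, hn⟩; exact ⟨hx, fun hb => hn (Or.inr hb)⟩
  · rintro ⟨hx, hn⟩
    refine ⟨hx, ?_⟩
    rintro (ha | hb)
    · exact Set.eq_empty_iff_forall_notMem.mp h x ⟨hx, ha⟩
    · exact hn hb

lemma diff_union_right {α : Type u} {X A B : Set α} (h : (X \ A) ∩ B = ∅) :
    X \ (A ∪ B) = X \ A := by
  ext x
  simp only [Set.mem_diff, Set.mem_union]
  constructor
  · rintro ⟨hx, hn⟩; exact ⟨hx, fun ha => hn (Or.inl ha)⟩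
  · rintro ⟨hx, hn⟩
    refine ⟨hx, ?_⟩
    rintro (ha | hb)
    · exact hn ha
    · exact Set.eq_empty_iff_forall_notMem.mp h x ⟨⟨hx, hn⟩, hb⟩

lemma bodyAtoms_mk {α : Type u} (h : Head α) (p q : Set α) :
    Rule.bodyAtoms ⟨h, p, q⟩ = p ∪ q := rfl

lemma omitA_omitA {α : Type u} (P : Program α) (A B : Set α) :
    omitA (omitA P A) B = omitA P (A ∪ B) := by
  ext r''
  constructor
  · rintro ⟨r', ⟨r, hr, hrel1⟩, hrel2⟩
    rcases hrel1 with ⟨hSA, hHA, rfl⟩ | ⟨hSA, hHA, hbA, rfl⟩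
    · refine ⟨r', hr, ?_⟩
      rcases hrel2 with ⟨hSB, hHB, rfl⟩ | ⟨hSB, hHB, hbB, rfl⟩
      · exact Or.inl ⟨by rw [Set.inter_union_distrib_left, hSA, hSB, Set.union_empty],
          by rw [omitted_union]; tauto, rfl⟩
      · refine Or.inr ⟨?_, by rw [omitted_union]; tauto, hbB, ?_⟩
        · intro hc
          exact hSB (by rw [Set.inter_union_distrib_left, hSA, Set.empty_union] at hc; exact hc)
        · have hp : r'.pos ∩ A = ∅ := by
            apply Set.eq_empty_of_subset_empty
            rw [← hSA]; exact Set.inter_subset_inter_left _ Set.subset_union_left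
          have hq : r'.neg ∩ A = ∅ := by
            apply Set.eq_empty_of_subset_empty
            rw [← hSA]; exact Set.inter_subset_inter_left _ Set.subset_union_right
          rw [diff_union_left hp, diff_union_left hq]
    · refine ⟨r, hr, ?_⟩
      have hbody : Rule.bodyAtoms ⟨Head.toChoice r.head, r.pos \ A, r.neg \ A⟩
          = r.bodyAtoms \ A := by
        rw [bodyAtoms_mk, ← Set.union_diff_distrib]; rfl
      rcases hrel2 with ⟨hSB, hHB, rfl⟩ | ⟨hSB, hHB, hbB, rfl⟩
      · rw [hbody] at hSB
        rw [omitted_toChoice] at hHB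
        refine Or.inr ⟨by
          intro hc
          exact hSA (by
            apply Set.eq_empty_of_subset_empty
            rw [← hc]; exact Set.inter_subset_inter_right _ Set.subset_union_left),
          by rw [omitted_union]; tauto, hbA, ?_⟩
        have hp : (r.pos \ A) ∩ B = ∅ := by
          apply Set.eq_empty_of_subset_empty
          rw [← hSB]
          exact Set.inter_subset_inter_left _ (Set.diff_subset_diff_left Set.subset_union_left)
        have hq : (r.neg \ A) ∩ B = ∅ := by
          apply Set.eq_empty_of_subset_empty
          rw [← hSB]
          exact Set.inter_subset_inter_left _ (Set.diff_subset_diff_left Set.subset_union_right)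
        rw [diff_union_right hp, diff_union_right hq]
      · rw [omitted_toChoice] at hHB
        refine Or.inr ⟨by
          intro hc
          exact hSA (by
            apply Set.eq_empty_of_subset_empty
            rw [← hc]; exact Set.inter_subset_inter_right _ Set.subset_union_left),
          by rw [omitted_union]; tauto, hbA, ?_⟩
        simp only [toChoice_toChoice, Set.diff_diff]
  · rintro ⟨r, hr, hrel⟩
    rcases hrel with ⟨hS, hH, rfl⟩ | ⟨hS, hH, hb, rfl⟩
    · rw [Set.inter_union_distrib_left, Set.union_empty_iff] at hS
      rw [omitted_union] at hH
      push_neg at hH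
      exact ⟨r'', ⟨r'', hr, Or.inl ⟨hS.1, hH.1, rfl⟩⟩, Or.inl ⟨hS.2, hH.2, rfl⟩⟩
    · rw [omitted_union] at hH
      push_neg at hH
      by_cases hA : r.bodyAtoms ∩ A = ∅
      · have hB : r.bodyAtoms ∩ B ≠ ∅ := by
          intro hc
          exact hS (by rw [Set.inter_union_distrib_left, hA, hc, Set.union_empty])
        refine ⟨r, ⟨r, hr, Or.inl ⟨hA, hH.1, rfl⟩⟩, Or.inr ⟨hB, hH.2, hb, ?_⟩⟩
        have hp : r.pos ∩ A = ∅ := by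
          apply Set.eq_empty_of_subset_empty
          rw [← hA]; exact Set.inter_subset_inter_left _ Set.subset_union_left
        have hq : r.neg ∩ A = ∅ := by
          apply Set.eq_empty_of_subset_empty
          rw [← hA]; exact Set.inter_subset_inter_left _ Set.subset_union_right
        rw [diff_union_left hp, diff_union_left hq]
      · refine ⟨⟨Head.toChoice r.head, r.pos \ A, r.neg \ A⟩,
          ⟨r, hr, Or.inr ⟨hA, hH.1, hb, rfl⟩⟩, ?_⟩
        have hbody : Rule.bodyAtoms ⟨Head.toChoice r.head, r.pos \ A, r.neg \ A⟩
            = r.bodyAtoms \ A := by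
          rw [bodyAtoms_mk, ← Set.union_diff_distrib]; rfl
        by_cases hB : (r.bodyAtoms \ A) ∩ B = ∅
        · refine Or.inl ⟨by rw [hbody]; exact hB, by rw [omitted_toChoice]; exact hH.2, ?_⟩
          have hp : (r.pos \ A) ∩ B = ∅ := by
            apply Set.eq_empty_of_subset_empty
            rw [← hB]
            exact Set.inter_subset_inter_left _ (Set.diff_subset_diff_left Set.subset_union_left)
          have hq : (r.neg \ A) ∩ B = ∅ := by
            apply Set.eq_empty_of_subset_empty
            rw [← hB]
            exact Set.inter_subset_inter_left _ (Set.diff_subset_diff_left Set.subset_union_right)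
          rw [diff_union_right hp, diff_union_right hq]
        · refine Or.inr ⟨by rw [hbody]; exact hB, by rw [omitted_toChoice]; exact hH.2,
            toChoice_ne_bot _ hb, ?_⟩
          simp only [toChoice_toChoice, Set.diff_diff]

lemma omitSeq_eq {α : Type u} (P : Program α) (l : List α) :
    omitSeq P l = omitA P {x | x ∈ l} := by
  induction l generalizing P with
  | nil => simp [omitSeq, omitA_empty]
  | cons a t ih =>
      rw [omitSeq, ih, omitA_omitA]
      have : ({a} ∪ {x | x ∈ t} : Set α) = {x | x ∈ a :: t} := by
        ext x; simp
      rw [this]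

/-- sequential omission in any order: for a normal logic program
`P` over a finite set `𝒜` of atoms, a set `A = {a₁, …, a_n} ⊆ 𝒜` of (distinct)
atoms enumerated by `f : Fin n → α`, and any permutation `π` of `{1, …, n}`,
`omit(P, A)` equals the sequential omission
`omit(⋯(omit(P, {a_{π(1)}}), ⋯, {a_{π(n-1)}}), {a_{π(n)}})`. -/
theorem omit_seq_perm {α : Type u} (P : Program α) (𝒜 : Set α)
    (n : ℕ) (f : Fin n → α)
    (h𝒜 : 𝒜.Finite) (hnorm : IsNormal P) (hP : ProgramOver P 𝒜)
    (hinj : Function.Injective f) (hsub : Set.range f ⊆ 𝒜)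
    (π : Equiv.Perm (Fin n)) :
    omitA P (Set.range f) = omitSeq P (List.ofFn (fun i => f (π i))) := by
  have hset : {x | x ∈ List.ofFn (fun i => f (π i))} = Set.range f := by
    ext x
    simp only [List.mem_ofFn, Set.mem_setOf_eq, Set.mem_range]
    constructor
    · rintro ⟨i, rfl⟩
      exact ⟨π i, rfl⟩
    · rintro ⟨i, rfl⟩
      exact ⟨π.symm i, by simp⟩
  rw [omitSeq_eq, hset]

end ASP
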